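/- Let P be a dynamic path instance with n ≥ 1. If w_0 ≥ 1, then for every index i with 0 ≤ i < n, the right limit of Θ_L(P,·) at x_i satisfies Θ_L(P,x_{i+1}) − τ·(x_{i+1} − x_i) ≥ Θ_L(P,x_i), i.e., all discontinuities of Θ_L(P,·) jump upward. Symmetrically, if w_n ≥ 1, then for every index i with 0 ≤ i < n, the left limit of Θ_R(P,·) at x_{i+1} satisfies Θ_R(P,x_i) − τ·(x_{i+1} − x_i) ≥ Θ_R(P,x_{i+1}). -/

import Mathlib

/-- A dynamic path instance: `n+1` vertices at strictly increasing coordinates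
`x 0 < x 1 < ⋯ < x n`, natural-number weights `w i`, positive integer capacities
`c j` (capacity of the edge from `x (j-1)` to `x j`, for `1 ≤ j ≤ n`), and a
positive travel time `τ` per unit distance. -/
structure DPath where
  n : ℕ
  x : ℕ → ℝ
  w : ℕ → ℕ
  c : ℕ → ℕ
  τ : ℝ
  hx : ∀ i, i < n → x i < x (i + 1)
  hc : ∀ j, 1 ≤ j → j ≤ n → 0 < c j
  hτ : 0 < τ

/-- `P.W a i = w_a + ⋯ + w_i`. -/
def DPath.W (P : DPath) (a i : ℕ) : ℕ := ∑ j ∈ Finset.Icc a i, P.w j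

/-- For a sink at `y` in subpath `P_{a,b}`: the minimum capacity
`min_{i+1 ≤ j ≤ k+1} c_j`, where `k` is the index with `x_k < y ≤ x_{k+1}`;
the edges `j` with `i+1 ≤ j ≤ k+1` are exactly those with `i+1 ≤ j ≤ b` and
`x (j-1) < y`. -/
noncomputable def DPath.cL (P : DPath) (b : ℕ) (y : ℝ) (i : ℕ) : ℕ :=
  sInf (P.c '' {j | i + 1 ≤ j ∧ j ≤ b ∧ P.x (j - 1) < y})

/-- For a sink at `y` in subpath `P_{a,b}`: the minimum capacity
`min_{k+1 ≤ j ≤ i} c_j`, where `k` is the index with `x_k ≤ y < x_{k+1}`;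
the edges `j` with `k+1 ≤ j ≤ i` are exactly those with `a+1 ≤ j ≤ i` and
`y < x j`. -/
noncomputable def DPath.cR (P : DPath) (a : ℕ) (y : ℝ) (i : ℕ) : ℕ :=
  sInf (P.c '' {j | a + 1 ≤ j ∧ j ≤ i ∧ y < P.x j})

/-- Left evacuation time `Θ_L(P_{a,b}, y)`: the maximum, over indices `i` with
`a ≤ i ≤ b`, `x i < y` and `W_{a,i} ≥ 1`, of
`(y − x_i)·τ + ⌈W_{a,i} / min_{i+1 ≤ j ≤ k+1} c_j⌉ − 1`; it is `0` if no such
index exists. -/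
noncomputable def ThetaL (P : DPath) (a b : ℕ) (y : ℝ) : ℝ :=
  sSup (insert 0 {t : ℝ | ∃ i, a ≤ i ∧ i ≤ b ∧ P.x i < y ∧ 1 ≤ P.W a i ∧
    t = (y - P.x i) * P.τ + (⌈(P.W a i : ℝ) / (P.cL b y i : ℝ)⌉ : ℝ) - 1})

/-- Right evacuation time `Θ_R(P_{a,b}, y)`. -/
noncomputable def ThetaR (P : DPath) (a b : ℕ) (y : ℝ) : ℝ :=
  sSup (insert 0 {t : ℝ | ∃ i, a ≤ i ∧ i ≤ b ∧ y < P.x i ∧ 1 ≤ P.W i b ∧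
    t = (P.x i - y) * P.τ + (⌈(P.W i b : ℝ) / (P.cR a y i : ℝ)⌉ : ℝ) - 1})

/-- Evacuation time of subpath `P_{a,b}` to sink `y`. -/
noncomputable def Theta (P : DPath) (a b : ℕ) (y : ℝ) : ℝ :=
  max (ThetaL P a b y) (ThetaR P a b y)

/-- `Θ¹(P_{a,b})`: minimum 1-sink evacuation time of subpath `P_{a,b}`
over sinks `y ∈ [x_a, x_b]`. -/
noncomputable def Theta1 (P : DPath) (a b : ℕ) : ℝ :=
  sInf (Theta P a b '' Set.Icc (P.x a) (P.x b))

/-- `Θᵏ(P_{a,b})`: minimum over all partitions of `{a, …, b}` into at most `k`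
nonempty intervals `[f j, f (j+1) - 1]`, of the maximum over the intervals of
`Θ¹`. -/
noncomputable def ThetaK (P : DPath) (k a b : ℕ) : ℝ :=
  sInf {t : ℝ | ∃ (m : ℕ) (f : ℕ → ℕ), 1 ≤ m ∧ m ≤ k ∧
    f 0 = a ∧ f m = b + 1 ∧ (∀ j, j < m → f j < f (j + 1)) ∧
    t = ⨆ j : Fin m, Theta1 P (f j.val) (f (j.val + 1) - 1)}

/-!
A source `i` that is already left of the sink `y` stays left of any sink `y' > y`; moving the
sink there lengthens its travel by `τ (y' - y)` and can only lower the bottleneck capacity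
`cL`, so its contribution to `Θ_L` grows by at least `τ (y' - y)`. The remaining
candidate `0` of the supremum is dominated by the contribution of the source `a` at `y'`,
which is at least `τ (y' - x_a)` as soon as `w_a ≥ 1`. The right side is the mirror image.
-/

namespace DPath

variable (P : DPath)

lemma x_le_x {i j : ℕ} (hij : i ≤ j) (hj : j ≤ P.n) : P.x i ≤ P.x j := by
  induction j, hij using Nat.le_induction with
  | base => rfl
  | succ m _ ih => exact (ih (by omega)).trans (P.hx m (by omega)).le

lemma W_self (a : ℕ) : P.W a a = P.w a := by
  simp [W]

lemma cL_pos {b i : ℕ} {y : ℝ} (hb : b ≤ P.n)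
    (h : {j | i + 1 ≤ j ∧ j ≤ b ∧ P.x (j - 1) < y}.Nonempty) : 0 < P.cL b y i := by
  obtain ⟨j, ⟨hij, hjb, -⟩, hcj⟩ := Nat.sInf_mem (h.image P.c)
  rw [cL, ← hcj]
  exact P.hc j (by omega) (by omega)

lemma cR_pos {a i : ℕ} {y : ℝ} (hi : i ≤ P.n)
    (h : {j | a + 1 ≤ j ∧ j ≤ i ∧ y < P.x j}.Nonempty) : 0 < P.cR a y i := by
  obtain ⟨j, ⟨haj, hji, -⟩, hcj⟩ := Nat.sInf_mem (h.image P.c)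
  rw [cR, ← hcj]
  exact P.hc j (by omega) (by omega)

lemma one_le_ceil_div {m c : ℕ} (hm : 1 ≤ m) (hc : 0 < c) : 1 ≤ ⌈(m : ℝ) / c⌉ :=
  Int.one_le_ceil_iff.mpr (by positivity)

/-- The case `c = 0` is the capacity `sInf ∅ = 0` of an empty edge set, where `⌈m / 0⌉ = 0`. -/
lemma ceil_div_le_ceil_div {m c c' : ℕ} (hc : c ≠ 0 → c' ≠ 0 ∧ c' ≤ c) :
    ⌈(m : ℝ) / c⌉ ≤ ⌈(m : ℝ) / c'⌉ := by
  rcases eq_or_ne c 0 with rfl | hc0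
  · simpa using Int.ceil_nonneg (by positivity)
  · obtain ⟨hc'0, hc'c⟩ := hc hc0
    gcongr

lemma ceil_div_cL_le {b : ℕ} (hb : b ≤ P.n) (m i : ℕ) {y y' : ℝ} (hyy' : y ≤ y') :
    ⌈(m : ℝ) / P.cL b y i⌉ ≤ ⌈(m : ℝ) / P.cL b y' i⌉ := by
  refine ceil_div_le_ceil_div fun hc => ?_
  have hne : {j | i + 1 ≤ j ∧ j ≤ b ∧ P.x (j - 1) < y}.Nonempty := by
    by_contra h
    rw [cL, Set.not_nonempty_iff_eq_empty.mp h, Set.image_empty, Nat.sInf_empty] at hc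
    exact hc rfl
  have hsub : {j | i + 1 ≤ j ∧ j ≤ b ∧ P.x (j - 1) < y} ⊆
      {j | i + 1 ≤ j ∧ j ≤ b ∧ P.x (j - 1) < y'} := by
    rintro j ⟨hij, hjb, hjy⟩
    exact ⟨hij, hjb, hjy.trans_le hyy'⟩
  exact ⟨(P.cL_pos hb (hne.mono hsub)).ne',
    csInf_le_csInf (OrderBot.bddBelow _) (hne.image P.c) (Set.image_mono hsub)⟩

lemma ceil_div_cR_le {a : ℕ} (m : ℕ) {i : ℕ} (hi : i ≤ P.n) {y y' : ℝ} (hyy' : y ≤ y') :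
    ⌈(m : ℝ) / P.cR a y' i⌉ ≤ ⌈(m : ℝ) / P.cR a y i⌉ := by
  refine ceil_div_le_ceil_div fun hc => ?_
  have hne' : {j | a + 1 ≤ j ∧ j ≤ i ∧ y' < P.x j}.Nonempty := by
    by_contra h
    rw [cR, Set.not_nonempty_iff_eq_empty.mp h, Set.image_empty, Nat.sInf_empty] at hc
    exact hc rfl
  have hsub : {j | a + 1 ≤ j ∧ j ≤ i ∧ y' < P.x j} ⊆ {j | a + 1 ≤ j ∧ j ≤ i ∧ y < P.x j} := by
    rintro j ⟨haj, hji, hyj⟩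
    exact ⟨haj, hji, hyy'.trans_lt hyj⟩
  exact ⟨(P.cR_pos hi (hne'.mono hsub)).ne',
    csInf_le_csInf (OrderBot.bddBelow _) (hne'.image P.c) (Set.image_mono hsub)⟩

end DPath

section EvacuationTime

variable (P : DPath) {a b : ℕ} {y : ℝ}

lemma le_thetaL {i : ℕ} (hai : a ≤ i) (hib : i ≤ b) (hxi : P.x i < y) (hW : 1 ≤ P.W a i) :
    (y - P.x i) * P.τ + ⌈(P.W a i : ℝ) / P.cL b y i⌉ - 1 ≤ ThetaL P a b y := by
  refine le_csSup (Set.Finite.bddAbove (Set.Finite.insert _ ?_))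
    (Set.mem_insert_of_mem _ ⟨i, hai, hib, hxi, hW, rfl⟩)
  refine ((Set.finite_Iic b).image fun k =>
    (y - P.x k) * P.τ + (⌈(P.W a k : ℝ) / P.cL b y k⌉ : ℝ) - 1).subset ?_
  rintro t ⟨k, -, hkb, -, -, rfl⟩
  exact ⟨k, hkb, rfl⟩

lemma le_thetaR {i : ℕ} (hai : a ≤ i) (hib : i ≤ b) (hxi : y < P.x i) (hW : 1 ≤ P.W i b) :
    (P.x i - y) * P.τ + ⌈(P.W i b : ℝ) / P.cR a y i⌉ - 1 ≤ ThetaR P a b y := by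
  refine le_csSup (Set.Finite.bddAbove (Set.Finite.insert _ ?_))
    (Set.mem_insert_of_mem _ ⟨i, hai, hib, hxi, hW, rfl⟩)
  refine ((Set.finite_Iic b).image fun k =>
    (P.x k - y) * P.τ + (⌈(P.W k b : ℝ) / P.cR a y k⌉ : ℝ) - 1).subset ?_
  rintro t ⟨k, -, hkb, -, -, rfl⟩
  exact ⟨k, hkb, rfl⟩

lemma thetaL_le {t : ℝ} (h0 : 0 ≤ t)
    (h : ∀ i, a ≤ i → i ≤ b → P.x i < y → 1 ≤ P.W a i →
      (y - P.x i) * P.τ + ⌈(P.W a i : ℝ) / P.cL b y i⌉ - 1 ≤ t) :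
    ThetaL P a b y ≤ t := by
  refine csSup_le (Set.insert_nonempty _ _) ?_
  rintro s (rfl | ⟨i, hai, hib, hxi, hW, rfl⟩)
  exacts [h0, h i hai hib hxi hW]

lemma thetaR_le {t : ℝ} (h0 : 0 ≤ t)
    (h : ∀ i, a ≤ i → i ≤ b → y < P.x i → 1 ≤ P.W i b →
      (P.x i - y) * P.τ + ⌈(P.W i b : ℝ) / P.cR a y i⌉ - 1 ≤ t) :
    ThetaR P a b y ≤ t := by
  refine csSup_le (Set.insert_nonempty _ _) ?_
  rintro s (rfl | ⟨i, hai, hib, hxi, hW, rfl⟩)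
  exacts [h0, h i hai hib hxi hW]

lemma thetaL_add_le (hab : a < b) (hb : b ≤ P.n) (hwa : 1 ≤ P.w a) {y' : ℝ}
    (hxa : P.x a ≤ y) (hyy' : y < y') :
    ThetaL P a b y + P.τ * (y' - y) ≤ ThetaL P a b y' := by
  rw [← le_sub_iff_add_le]
  refine thetaL_le P ?_ fun i hai hib hxi hW => ?_
  · have hWa : 1 ≤ P.W a a := (P.W_self a).symm ▸ hwa
    have hc : 0 < P.cL b y' a :=
      P.cL_pos hb ⟨a + 1, le_rfl, hab, by simpa using hxa.trans_lt hyy'⟩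
    have hceil : (1 : ℝ) ≤ ⌈(P.W a a : ℝ) / P.cL b y' a⌉ := by
      exact_mod_cast DPath.one_le_ceil_div hWa hc
    have hdist : P.τ * (y' - y) ≤ (y' - P.x a) * P.τ := by
      rw [mul_comm]
      gcongr
      exact P.hτ.le
    have := le_thetaL P le_rfl hab.le (hxa.trans_lt hyy') hWa
    linarith
  · have hceil : (⌈(P.W a i : ℝ) / P.cL b y i⌉ : ℝ) ≤ ⌈(P.W a i : ℝ) / P.cL b y' i⌉ := by
      exact_mod_cast P.ceil_div_cL_le hb _ i hyy'.le
    have := le_thetaL P hai hib (hxi.trans hyy') hW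
    linarith

lemma thetaR_add_le (hab : a < b) (hb : b ≤ P.n) (hwb : 1 ≤ P.w b) {y' : ℝ}
    (hyy' : y < y') (hxb : y' ≤ P.x b) :
    ThetaR P a b y' + P.τ * (y' - y) ≤ ThetaR P a b y := by
  rw [← le_sub_iff_add_le]
  refine thetaR_le P ?_ fun i hai hib hxi hW => ?_
  · have hWb : 1 ≤ P.W b b := (P.W_self b).symm ▸ hwb
    have hc : 0 < P.cR a y b := P.cR_pos hb ⟨b, hab, le_rfl, hyy'.trans_le hxb⟩
    have hceil : (1 : ℝ) ≤ ⌈(P.W b b : ℝ) / P.cR a y b⌉ := by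
      exact_mod_cast DPath.one_le_ceil_div hWb hc
    have hdist : P.τ * (y' - y) ≤ (P.x b - y) * P.τ := by
      rw [mul_comm]
      gcongr
      exact P.hτ.le
    have := le_thetaR P hab.le le_rfl (hyy'.trans_le hxb) hWb
    linarith
  · have hceil : (⌈(P.W i b : ℝ) / P.cR a y' i⌉ : ℝ) ≤ ⌈(P.W i b : ℝ) / P.cR a y i⌉ := by
      exact_mod_cast P.ceil_div_cR_le _ (hib.trans hb) hyy'.le
    have := le_thetaR P hai hib (hyy'.trans hxi) hW
    linarith

end EvacuationTime

theorem stmt5_general (P : DPath) :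
    (1 ≤ P.w 0 → ∀ i, i < P.n →
      ThetaL P 0 P.n (P.x (i + 1)) - P.τ * (P.x (i + 1) - P.x i) ≥
        ThetaL P 0 P.n (P.x i)) ∧
    (1 ≤ P.w P.n → ∀ i, i < P.n →
      ThetaR P 0 P.n (P.x i) - P.τ * (P.x (i + 1) - P.x i) ≥
        ThetaR P 0 P.n (P.x (i + 1))) := by
  refine ⟨fun hw i hi => ?_, fun hw i hi => ?_⟩
  · have := thetaL_add_le P (by omega) le_rfl hw (P.x_le_x (Nat.zero_le i) hi.le) (P.hx i hi)
    linarith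
  · have := thetaR_add_le P (a := 0) (by omega) le_rfl hw (P.hx i hi) (P.x_le_x hi le_rfl)
    linarith

/-- all discontinuities of `Θ_L(P,·)` jump upward (the right limit
at `x_i`, namely `Θ_L(P,x_{i+1}) − τ·(x_{i+1} − x_i)`, is `≥ Θ_L(P,x_i)`), and
symmetrically for `Θ_R(P,·)`. -/
theorem stmt5 (P : DPath) (hn : 1 ≤ P.n) :
    (1 ≤ P.w 0 → ∀ i, i < P.n →
      ThetaL P 0 P.n (P.x (i + 1)) - P.τ * (P.x (i + 1) - P.x i) ≥
        ThetaL P 0 P.n (P.x i)) ∧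
    (1 ≤ P.w P.n → ∀ i, i < P.n →
      ThetaR P 0 P.n (P.x i) - P.τ * (P.x (i + 1) - P.x i) ≥
        ThetaR P 0 P.n (P.x (i + 1))) :=
  stmt5_general P
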